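/- arXiv:2211.10783 — 3 statements merged into one kernel-verified Lean document; each statement's English description precedes it below -/
import Mathlib

section
/- Let d ≥ 1, γ > 0, Δ ≥ 0. Let f(x,ξ) be a stochastic function with f(x) := E_ξ[f(x,ξ)], let δ : ℝ^d → ℝ satisfy |δ(x)| ≤ Δ for all x, and set f_δ(x,ξ) := f(x,ξ) + δ(x). Let e be uniformly distributed on the unit l₁-sphere S₁^d(1), independent of ξ, define the two-point l₁-randomized gradient estimator g(x,ξ,e) := (d/(2γ))·(f_δ(x+γe,ξ) − f_δ(x−γe,ξ))·sign(e), and let ∇f_γ(x) := E_e[(d/γ)·f(x+γe)·sign(e)]. Then for every x ∈ ℝ^d and every r ∈ ℝ^d: E_{ξ,e}[⟨g(x,ξ,e), r⟩] ≥ ⟨∇f_γ(x), r⟩ − (d·Δ/γ)·E_e[|⟨sign(e), r⟩|]. -/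
open MeasureTheory
open scoped ENNReal RealInnerProductSpace

noncomputable section

/-- The `l_p` norm on `EuclideanSpace ℝ (Fin d)` (with `p = ∞` giving the sup norm). -/
def lpNorm {d : ℕ} (p : ℝ≥0∞) (x : EuclideanSpace ℝ (Fin d)) : ℝ :=
  if p = ∞ then ⨆ i, |x i| else (∑ i, |x i| ^ p.toReal) ^ (1 / p.toReal)

/-- The unit `l₁`-ball `B₁^d(1)`. -/
def l1Ball (d : ℕ) : Set (EuclideanSpace ℝ (Fin d)) := {u | ∑ i, |u i| ≤ 1}

/-- The Euclidean unit ball `B₂^d(1)`. -/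
def l2Ball (d : ℕ) : Set (EuclideanSpace ℝ (Fin d)) := {u | ‖u‖ ≤ 1}

/-- The unit `l₁`-sphere `S₁^d(1)`. -/
def l1Sphere (d : ℕ) : Set (EuclideanSpace ℝ (Fin d)) := {u | ∑ i, |u i| = 1}

/-- The Euclidean unit sphere `S₂^d(1)`. -/
def l2Sphere (d : ℕ) : Set (EuclideanSpace ℝ (Fin d)) := {u | ‖u‖ = 1}

/-- Uniform probability distribution on a solid body: normalized Lebesgue measure. -/
def uniformOn {d : ℕ} (S : Set (EuclideanSpace ℝ (Fin d))) :
    Measure (EuclideanSpace ℝ (Fin d)) :=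
  (volume S)⁻¹ • volume.restrict S

/-- Uniform probability distribution on a hypersurface: normalized `(d-1)`-dimensional
Hausdorff measure. -/
def uniformOnSphere {d : ℕ} (S : Set (EuclideanSpace ℝ (Fin d))) :
    Measure (EuclideanSpace ℝ (Fin d)) :=
  (μH[(d : ℝ) - 1] S)⁻¹ • (μH[(d : ℝ) - 1]).restrict S

/-- Coordinatewise sign vector `sign(e)`. -/
def signVec {d : ℕ} (e : EuclideanSpace ℝ (Fin d)) : EuclideanSpace ℝ (Fin d) :=
  (WithLp.equiv 2 (Fin d → ℝ)).symm (fun i => Real.sign (e i))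

/-!
Put `w e = ⟪sign e, r⟫`. Averaging over `ξ` first turns the estimator into
`(d/(2γ)) · w e · (φ e - φ (-e))` with `φ e = (F + δ)(x + γe)`. The law of `e` is invariant
under `e ↦ -e` and `w` is odd, so its mean is `(d/γ) · E[w e · φ e]`: the `F`-part of `φ` gives
exactly `⟪∇f_γ(x), r⟫`, and the `δ`-part is at least `-(dΔ/γ) · E|w e|`.
-/

section integral

variable {E : Type*} [MeasurableSpace E] {ν : Measure E}

theorem integral_prod_mul_snd {Ω : Type*} [MeasurableSpace Ω] (μ : Measure Ω) [SFinite μ]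
    [SFinite ν] {w : E → ℝ} {C : ℝ} (hw : Measurable w) (hwC : ∀ e, ‖w e‖ ≤ C)
    {h : Ω × E → ℝ} (hh : Integrable h (μ.prod ν)) :
    ∫ z, w z.2 * h z ∂(μ.prod ν) = ∫ e, w e * ∫ ω, h (ω, e) ∂μ ∂ν := by
  have hwh : Integrable (fun z => w z.2 * h z) (μ.prod ν) :=
    hh.bdd_mul (hw.comp measurable_snd).aestronglyMeasurable (ae_of_all _ fun z => hwC z.2)
  simp only [integral_prod_symm _ hwh, integral_const_mul]

theorem integral_add_const_sub_add_const {Ω : Type*} [MeasurableSpace Ω] {μ : Measure Ω}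
    [IsProbabilityMeasure μ] {g₁ g₂ : Ω → ℝ} (h₁ : Integrable g₁ μ) (h₂ : Integrable g₂ μ)
    (a b : ℝ) :
    ∫ ω, ((g₁ ω + a) - (g₂ ω + b)) ∂μ = (∫ ω, g₁ ω ∂μ + a) - (∫ ω, g₂ ω ∂μ + b) := by
  rw [integral_sub (h₁.fun_add (integrable_const a)) (h₂.fun_add (integrable_const b)),
    integral_add h₁ (integrable_const a), integral_add h₂ (integrable_const b)]
  simp

theorem integral_mul_sub_comp_neg_of_odd [AddGroup E] [MeasurableNeg E] [ν.IsNegInvariant]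
    {w φ : E → ℝ} (hw : ∀ e, w (-e) = -w e) (hwφ : Integrable (fun e => w e * φ e) ν) :
    ∫ e, w e * (φ e - φ (-e)) ∂ν = 2 * ∫ e, w e * φ e ∂ν := by
  have hflip : ∫ e, w e * φ (-e) ∂ν = -∫ e, w e * φ e ∂ν := by
    rw [← integral_neg_eq_self, ← integral_neg]
    simp only [neg_neg, hw, neg_mul]
  have hwφ' : Integrable (fun e => w e * φ (-e)) ν := by
    simpa only [hw, neg_mul, neg_neg] using integrable_fun_neg_iff.mpr hwφ.comp_neg
  simp only [mul_sub]
  rw [integral_sub hwφ hwφ', hflip]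
  ring

theorem abs_integral_mul_le_of_abs_le {w ψ : E → ℝ} {c : ℝ} (hw : Integrable w ν)
    (hψ : ∀ e, |ψ e| ≤ c) : |∫ e, w e * ψ e ∂ν| ≤ c * ∫ e, |w e| ∂ν := by
  calc |∫ e, w e * ψ e ∂ν| ≤ ∫ e, c * |w e| ∂ν := by
        rw [← Real.norm_eq_abs]
        refine norm_integral_le_of_norm_le (hw.abs.const_mul c) (ae_of_all _ fun e => ?_)
        rw [Real.norm_eq_abs, abs_mul, mul_comm]
        exact mul_le_mul_of_nonneg_right (hψ e) (abs_nonneg _)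
    _ = c * ∫ e, |w e| ∂ν := integral_const_mul c _

theorem le_integral_mul_sub_comp_neg_of_abs_le [AddGroup E] [MeasurableNeg E] [IsFiniteMeasure ν]
    [ν.IsNegInvariant] {w φ ψ : E → ℝ} {C Δ : ℝ} (hw_odd : ∀ e, w (-e) = -w e)
    (hw : Measurable w) (hwC : ∀ e, ‖w e‖ ≤ C) (hφ : Integrable φ ν) (hψm : Measurable ψ)
    (hψ : ∀ e, |ψ e| ≤ Δ) :
    2 * (∫ e, w e * φ e ∂ν - Δ * ∫ e, |w e| ∂ν)
      ≤ ∫ e, w e * ((φ e + ψ e) - (φ (-e) + ψ (-e))) ∂ν := by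
  have hw_int : Integrable w ν := .of_bound hw.aestronglyMeasurable C (ae_of_all _ hwC)
  have hψ_int : Integrable ψ ν := .of_bound hψm.aestronglyMeasurable Δ (ae_of_all _ hψ)
  have hwφ := hφ.bdd_mul hw.aestronglyMeasurable (ae_of_all _ hwC)
  have hwψ := hψ_int.bdd_mul hw.aestronglyMeasurable (ae_of_all _ hwC)
  have hbias := abs_le.mp (abs_integral_mul_le_of_abs_le hw_int hψ)
  rw [integral_mul_sub_comp_neg_of_odd hw_odd (hφ.fun_add hψ_int |>.bdd_mul
    hw.aestronglyMeasurable (ae_of_all _ hwC))]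
  simp only [mul_add]
  rw [integral_add hwφ hwψ]
  linarith [hbias.1]

end integral

theorem Real.abs_sign_le_one (x : ℝ) : |Real.sign x| ≤ 1 := by
  rcases Real.sign_apply_eq x with h | h | h <;> simp [h]

theorem Real.measurable_sign : Measurable Real.sign :=
  Measurable.ite (measurableSet_lt measurable_id measurable_const) measurable_const
    (Measurable.ite (measurableSet_lt measurable_const measurable_id) measurable_const
      measurable_const)

section signVec

variable {d : ℕ}

theorem signVec_apply (e : EuclideanSpace ℝ (Fin d)) (i : Fin d) :
    signVec e i = Real.sign (e i) :=
  rfl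

theorem measurable_signVec : Measurable (signVec (d := d)) :=
  (MeasurableEquiv.toLp 2 (Fin d → ℝ)).measurable.comp <| measurable_pi_lambda _ fun i =>
    Real.measurable_sign.comp (EuclideanSpace.proj i).continuous.measurable

theorem signVec_neg (e : EuclideanSpace ℝ (Fin d)) : signVec (-e) = -signVec e := by
  ext i
  simp only [signVec_apply, PiLp.neg_apply, Real.sign_neg]

theorem norm_signVec_le (e : EuclideanSpace ℝ (Fin d)) : ‖signVec e‖ ≤ √d := by
  rw [EuclideanSpace.norm_eq]
  gcongr
  calc ∑ i, ‖signVec e i‖ ^ 2 ≤ ∑ _i : Fin d, (1 : ℝ) := by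
        gcongr with i
        exact pow_le_one₀ (norm_nonneg _) (Real.abs_sign_le_one _)
    _ = d := by simp

theorem norm_inner_signVec_le (e r : EuclideanSpace ℝ (Fin d)) :
    ‖⟪signVec e, r⟫‖ ≤ √d * ‖r‖ :=
  (norm_inner_le_norm _ _).trans (by gcongr; exact norm_signVec_le e)

theorem inner_signVec_neg (e r : EuclideanSpace ℝ (Fin d)) :
    ⟪signVec (-e), r⟫ = -⟪signVec e, r⟫ := by
  rw [signVec_neg, inner_neg_left]

theorem inner_integral_smul_signVec {ν : Measure (EuclideanSpace ℝ (Fin d))}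
    {φ : EuclideanSpace ℝ (Fin d) → ℝ} (hφ : Integrable φ ν) (r : EuclideanSpace ℝ (Fin d)) :
    ⟪∫ e, φ e • signVec e ∂ν, r⟫ = ∫ e, φ e * ⟪signVec e, r⟫ ∂ν := by
  have hint : Integrable (fun e => φ e • signVec e) ν :=
    hφ.smul_bdd _ measurable_signVec.aestronglyMeasurable (ae_of_all _ norm_signVec_le)
  rw [real_inner_comm, ← integral_inner hint]
  simp only [real_inner_smul_right, real_inner_comm]

theorem integral_prod_inner_smul_signVec {Ω : Type*} [MeasurableSpace Ω]
    {μ : Measure Ω} [SFinite μ] {ν : Measure (EuclideanSpace ℝ (Fin d))} [SFinite ν] (c : ℝ)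
    {h : Ω × EuclideanSpace ℝ (Fin d) → ℝ} (hh : Integrable h (μ.prod ν))
    (r : EuclideanSpace ℝ (Fin d)) :
    ∫ z, ⟪(c * h z) • signVec z.2, r⟫ ∂(μ.prod ν)
      = c * ∫ e, ⟪signVec e, r⟫ * ∫ ω, h (ω, e) ∂μ ∂ν := by
  simp only [real_inner_smul_left, mul_comm (c * _), mul_left_comm _ c, integral_const_mul]
  rw [integral_prod_mul_snd μ (measurable_signVec.inner measurable_const)
    (fun e => norm_inner_signVec_le e r) hh]

end signVec

section uniformOnSphere

variable {d : ℕ}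

instance isFiniteMeasure_uniformOnSphere (S : Set (EuclideanSpace ℝ (Fin d))) :
    IsFiniteMeasure (uniformOnSphere S) where
  measure_univ_lt_top := by
    rw [uniformOnSphere, Measure.smul_apply, Measure.restrict_apply_univ, smul_eq_mul]
    exact (ENNReal.inv_mul_le_one _).trans_lt ENNReal.one_lt_top

theorem isNegInvariant_uniformOnSphere {S : Set (EuclideanSpace ℝ (Fin d))} (hS : -S = S) :
    (uniformOnSphere S).IsNegInvariant where
  neg_eq_self := by
    have hneg : MeasurableEmbedding (Neg.neg : EuclideanSpace ℝ (Fin d) → _) :=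
      (MeasurableEquiv.neg _).measurableEmbedding
    have hμH := (isometry_neg (G := EuclideanSpace ℝ (Fin d))).map_hausdorffMeasure
      (d := (d : ℝ) - 1) (Or.inr neg_surjective)
    rw [neg_surjective.range_eq, Measure.restrict_univ] at hμH
    rw [Measure.neg, uniformOnSphere, Measure.map_smul]
    congr 1
    conv_lhs => rw [← hS]
    rw [← Set.neg_preimage, ← hneg.restrict_map, hμH]

theorem neg_l1Sphere (d : ℕ) : -l1Sphere d = l1Sphere d := by
  ext u
  simp [l1Sphere]

instance : (uniformOnSphere (l1Sphere d)).IsNegInvariant :=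
  isNegInvariant_uniformOnSphere (neg_l1Sphere d)

end uniformOnSphere

theorem two_point_l1_bias_general {d : ℕ} (γ Δ : ℝ) (hγ : 0 < γ)
    {Ω : Type*} [MeasurableSpace Ω] (μξ : Measure Ω) [IsProbabilityMeasure μξ]
    (f : EuclideanSpace ℝ (Fin d) → Ω → ℝ) (F : EuclideanSpace ℝ (Fin d) → ℝ)
    (hF : ∀ y, F y = ∫ ω, f y ω ∂μξ)
    (δ : EuclideanSpace ℝ (Fin d) → ℝ) (hδm : Measurable δ)
    (hδ : ∀ y : EuclideanSpace ℝ (Fin d), |δ y| ≤ Δ)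
    (x r : EuclideanSpace ℝ (Fin d))
    (hint1 : Integrable (fun z : Ω × EuclideanSpace ℝ (Fin d) => f (x + γ • z.2) z.1)
      (μξ.prod (uniformOnSphere (l1Sphere d))))
    (hint2 : Integrable (fun z : Ω × EuclideanSpace ℝ (Fin d) => f (x - γ • z.2) z.1)
      (μξ.prod (uniformOnSphere (l1Sphere d)))) :
    ∫ z : Ω × EuclideanSpace ℝ (Fin d),
        ⟪(d / (2 * γ) * ((f (x + γ • z.2) z.1 + δ (x + γ • z.2)) -
            (f (x - γ • z.2) z.1 + δ (x - γ • z.2)))) • signVec z.2, r⟫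
        ∂(μξ.prod (uniformOnSphere (l1Sphere d)))
      ≥ ⟪∫ e, (d / γ * F (x + γ • e)) • signVec e ∂(uniformOnSphere (l1Sphere d)), r⟫
          - d * Δ / γ * ∫ e, |⟪signVec e, r⟫| ∂(uniformOnSphere (l1Sphere d)) := by
  set ν := uniformOnSphere (l1Sphere d)
  have hF_add : Integrable (fun e => F (x + γ • e)) ν := by
    simpa only [← hF] using hint1.integral_prod_right
  have hH : Integrable (fun z : Ω × EuclideanSpace ℝ (Fin d) =>
      (f (x + γ • z.2) z.1 + δ (x + γ • z.2)) - (f (x - γ • z.2) z.1 + δ (x - γ • z.2)))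
      (μξ.prod ν) :=
    (hint1.add (.of_bound (hδm.comp (by fun_prop)).aestronglyMeasurable Δ
      (ae_of_all _ fun _ => hδ _))).sub
      (hint2.add (.of_bound (hδm.comp (by fun_prop)).aestronglyMeasurable Δ
        (ae_of_all _ fun _ => hδ _)))
  have hfiber : ∀ᵐ e ∂ν,
      ∫ ω, ((f (x + γ • e) ω + δ (x + γ • e)) - (f (x - γ • e) ω + δ (x - γ • e))) ∂μξ
        = (F (x + γ • e) + δ (x + γ • e)) - (F (x - γ • e) + δ (x - γ • e)) := by
    filter_upwards [hint1.prod_left_ae, hint2.prod_left_ae] with e h_add h_sub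
    rw [integral_add_const_sub_add_const h_add h_sub, ← hF, ← hF]
  have hgrad : ⟪∫ e, (d / γ * F (x + γ • e)) • signVec e ∂ν, r⟫
      = d / γ * ∫ e, ⟪signVec e, r⟫ * F (x + γ • e) ∂ν := by
    rw [inner_integral_smul_signVec (hF_add.const_mul _), ← integral_const_mul]
    exact integral_congr_ae <| ae_of_all _ fun e => by ring
  have hsymm := le_integral_mul_sub_comp_neg_of_abs_le (ν := ν) (ψ := fun e => δ (x + γ • e))
    (fun e => inner_signVec_neg e r) (measurable_signVec.inner measurable_const)
    (norm_inner_signVec_le · r) hF_add (hδm.comp (by fun_prop)) (fun e => hδ (x + γ • e))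
  simp only [smul_neg, ← sub_eq_add_neg] at hsymm
  rw [integral_prod_inner_smul_signVec _ hH,
    integral_congr_ae (hfiber.mono fun e he => congrArg (⟪signVec e, r⟫ * ·) he), hgrad,
    ge_iff_le]
  linear_combination mul_le_mul_of_nonneg_left hsymm (by positivity : (0 : ℝ) ≤ d / (2 * γ))

/-- Bias bound for the two-point `l₁`-randomized gradient estimator:
`E_{ξ,e}[⟨g(x,ξ,e), r⟩] ≥ ⟨∇f_γ(x), r⟩ − (dΔ/γ)·E_e[|⟨sign(e), r⟩|]`, where
`g(x,ξ,e) = (d/(2γ))·(f_δ(x+γe,ξ) − f_δ(x−γe,ξ))·sign(e)` and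
`∇f_γ(x) = E_e[(d/γ)·f(x+γe)·sign(e)]`, `e` uniform on the unit `l₁`-sphere. -/
theorem two_point_l1_bias {d : ℕ} (hd : 1 ≤ d) (γ Δ : ℝ) (hγ : 0 < γ) (hΔ : 0 ≤ Δ)
    {Ω : Type*} [MeasurableSpace Ω] (μξ : Measure Ω) [IsProbabilityMeasure μξ]
    (f : EuclideanSpace ℝ (Fin d) → Ω → ℝ) (F : EuclideanSpace ℝ (Fin d) → ℝ)
    (hF : ∀ y, F y = ∫ ω, f y ω ∂μξ)
    (hfm : Measurable (Function.uncurry f))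
    (δ : EuclideanSpace ℝ (Fin d) → ℝ) (hδm : Measurable δ)
    (hδ : ∀ y : EuclideanSpace ℝ (Fin d), |δ y| ≤ Δ)
    (x r : EuclideanSpace ℝ (Fin d))
    (hint1 : Integrable (fun z : Ω × EuclideanSpace ℝ (Fin d) => f (x + γ • z.2) z.1)
      (μξ.prod (uniformOnSphere (l1Sphere d))))
    (hint2 : Integrable (fun z : Ω × EuclideanSpace ℝ (Fin d) => f (x - γ • z.2) z.1)
      (μξ.prod (uniformOnSphere (l1Sphere d)))) :
    ∫ z : Ω × EuclideanSpace ℝ (Fin d),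
        ⟪(d / (2 * γ) * ((f (x + γ • z.2) z.1 + δ (x + γ • z.2)) -
            (f (x - γ • z.2) z.1 + δ (x - γ • z.2)))) • signVec z.2, r⟫
        ∂(μξ.prod (uniformOnSphere (l1Sphere d)))
      ≥ ⟪∫ e, (d / γ * F (x + γ • e)) • signVec e ∂(uniformOnSphere (l1Sphere d)), r⟫
          - d * Δ / γ * ∫ e, |⟪signVec e, r⟫| ∂(uniformOnSphere (l1Sphere d)) :=
  two_point_l1_bias_general γ Δ hγ μξ f F hF δ hδm hδ x r hint1 hint2
end
end

section
/- Let d ≥ 1, γ > 0, Δ ≥ 0. Let f(x,ξ) be a stochastic function with f(x) := E_ξ[f(x,ξ)], let δ : ℝ^d → ℝ satisfy |δ(x)| ≤ Δ for all x, and set f_δ(x,ξ) := f(x,ξ) + δ(x). Let e be uniformly distributed on the Euclidean unit sphere S₂^d(1), independent of ξ, define the two-point l₂-randomized gradient estimator g(x,ξ,e) := (d/(2γ))·(f_δ(x+γe,ξ) − f_δ(x−γe,ξ))·e, and let ∇f_γ(x) := E_e[(d/γ)·f(x+γe)·e]. Then for every x ∈ ℝ^d and every r ∈ ℝ^d: E_{ξ,e}[⟨g(x,ξ,e),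 r⟩] ≥ ⟨∇f_γ(x), r⟩ − (d·Δ/γ)·E_e[|⟨e, r⟩|]. -/
open MeasureTheory
open scoped ENNReal RealInnerProductSpace

set_option maxHeartbeats 2000000 in
/-- Bias bound for the two-point `l₂`-randomized gradient estimator:
`E_{ξ,e}[⟨g(x,ξ,e), r⟩] ≥ ⟨∇f_γ(x), r⟩ − (dΔ/γ)·E_e[|⟨e, r⟩|]`, where
`g(x,ξ,e) = (d/(2γ))·(f_δ(x+γe,ξ) − f_δ(x−γe,ξ))·e` and
`∇f_γ(x) = E_e[(d/γ)·f(x+γe)·e]`, `e` uniform on the Euclidean unit sphere. -/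
theorem two_point_l2_bias {d : ℕ} (hd : 1 ≤ d) (γ Δ : ℝ) (hγ : 0 < γ) (hΔ : 0 ≤ Δ)
    {Ω : Type*} [MeasurableSpace Ω] (μξ : Measure Ω) [IsProbabilityMeasure μξ]
    (f : EuclideanSpace ℝ (Fin d) → Ω → ℝ) (F : EuclideanSpace ℝ (Fin d) → ℝ)
    (hF : ∀ y, F y = ∫ ω, f y ω ∂μξ)
    (hfm : Measurable (Function.uncurry f))
    (δ : EuclideanSpace ℝ (Fin d) → ℝ) (hδm : Measurable δ)
    (hδ : ∀ y : EuclideanSpace ℝ (Fin d), |δ y| ≤ Δ)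
    (x r : EuclideanSpace ℝ (Fin d))
    (hint1 : Integrable (fun z : Ω × EuclideanSpace ℝ (Fin d) => f (x + γ • z.2) z.1)
      (μξ.prod (uniformOnSphere (l2Sphere d))))
    (hint2 : Integrable (fun z : Ω × EuclideanSpace ℝ (Fin d) => f (x - γ • z.2) z.1)
      (μξ.prod (uniformOnSphere (l2Sphere d)))) :
    ∫ z : Ω × EuclideanSpace ℝ (Fin d),
        ⟪(d / (2 * γ) * ((f (x + γ • z.2) z.1 + δ (x + γ • z.2)) -
            (f (x - γ • z.2) z.1 + δ (x - γ • z.2)))) • z.2, r⟫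
        ∂(μξ.prod (uniformOnSphere (l2Sphere d)))
      ≥ ⟪∫ e, (d / γ * F (x + γ • e)) • e ∂(uniformOnSphere (l2Sphere d)), r⟫
          - d * Δ / γ * ∫ e, |⟪e, r⟫| ∂(uniformOnSphere (l2Sphere d)) := by
  classical
  set ν := uniformOnSphere (l2Sphere d) with hνdef
  by_cases hz : ν = 0
  · rw [hz, Measure.prod_zero]
    simp
  -- nondegenerate case
  have hS0 : μH[(d:ℝ)-1] (l2Sphere d) ≠ 0 := by
    intro h
    exact hz (by simp [hνdef, uniformOnSphere, Measure.restrict_eq_zero.mpr h])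
  have hStop : μH[(d:ℝ)-1] (l2Sphere d) ≠ ∞ := by
    intro h
    exact hz (by simp [hνdef, uniformOnSphere, h])
  haveI hprob : IsProbabilityMeasure ν := by
    constructor
    rw [hνdef, uniformOnSphere, Measure.smul_apply, Measure.restrict_apply_univ, smul_eq_mul,
      ENNReal.inv_mul_cancel hS0 hStop]
  have hSm : MeasurableSet (l2Sphere d) :=
    (isClosed_eq continuous_norm continuous_const).measurableSet
  have hae : ∀ᵐ e ∂ν, ‖e‖ = 1 := by
    rw [hνdef, uniformOnSphere]
    exact Measure.ae_smul_measure (ae_restrict_mem hSm) _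
  -- negation invariance
  have hnegm : MeasurableEmbedding (fun e : EuclideanSpace ℝ (Fin d) => -e) :=
    (Homeomorph.neg (EuclideanSpace ℝ (Fin d))).toMeasurableEquiv.measurableEmbedding
  have hmapH : Measure.map (fun e : EuclideanSpace ℝ (Fin d) => -e)
      (μH[(d:ℝ)-1] : Measure (EuclideanSpace ℝ (Fin d))) = μH[(d:ℝ)-1] :=
    (LinearIsometryEquiv.neg ℝ (E := EuclideanSpace ℝ (Fin d))).toIsometryEquiv.map_hausdorffMeasure _
  have hpre : (fun e : EuclideanSpace ℝ (Fin d) => -e) ⁻¹' (l2Sphere d) = l2Sphere d := by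
    ext u; simp [l2Sphere]
  have hres : ((μH[(d:ℝ)-1]).restrict (l2Sphere d)).map (fun e : EuclideanSpace ℝ (Fin d) => -e)
      = (μH[(d:ℝ)-1]).restrict (l2Sphere d) := by
    conv_lhs => rw [← hpre, ← hnegm.restrict_map, hmapH]
  have hmap : ν.map (fun e : EuclideanSpace ℝ (Fin d) => -e) = ν := by
    rw [hνdef, uniformOnSphere, Measure.map_smul, hres]
  have hsym : ∀ g : EuclideanSpace ℝ (Fin d) → ℝ, ∫ e, g (-e) ∂ν = ∫ e, g e ∂ν := by
    intro g
    conv_rhs => rw [← hmap, hnegm.integral_map]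
  -- measurability helpers
  have hmfp : Measurable (fun z : Ω × EuclideanSpace ℝ (Fin d) => f (x + γ • z.2) z.1) :=
    hfm.comp ((measurable_const.add (measurable_snd.const_smul γ)).prodMk measurable_fst)
  have hmfm : Measurable (fun z : Ω × EuclideanSpace ℝ (Fin d) => f (x - γ • z.2) z.1) :=
    hfm.comp ((measurable_const.sub (measurable_snd.const_smul γ)).prodMk measurable_fst)
  have hmφ : Measurable (fun e : EuclideanSpace ℝ (Fin d) => ⟪e, r⟫) :=
    (continuous_id.inner continuous_const).measurable
  have hmδ : Measurable (fun e : EuclideanSpace ℝ (Fin d) =>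
      δ (x + γ • e) - δ (x - γ • e)) :=
    (hδm.comp (measurable_const.add (measurable_id.const_smul γ))).sub
      (hδm.comp (measurable_const.sub (measurable_id.const_smul γ)))
  have haeprod : ∀ᵐ z : Ω × EuclideanSpace ℝ (Fin d) ∂(μξ.prod ν), ‖z.2‖ = 1 :=
    Measure.quasiMeasurePreserving_snd.ae hae
  have hδ2 : ∀ e : EuclideanSpace ℝ (Fin d), |δ (x + γ • e) - δ (x - γ • e)| ≤ 2 * Δ := by
    intro e
    calc |δ (x + γ • e) - δ (x - γ • e)| ≤ |δ (x + γ • e)| + |δ (x - γ • e)| := abs_sub _ _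
      _ ≤ 2 * Δ := by linarith [hδ (x + γ • e), hδ (x - γ • e)]
  -- integrabilities on the product
  have hA : Integrable (fun z : Ω × EuclideanSpace ℝ (Fin d) =>
      f (x + γ • z.2) z.1 * ⟪z.2, r⟫) (μξ.prod ν) := by
    refine Integrable.mono' (hint1.norm.const_mul ‖r‖)
      ((hmfp.mul (hmφ.comp measurable_snd)).aestronglyMeasurable) ?_
    filter_upwards [haeprod] with z hz
    rw [norm_mul, Real.norm_eq_abs (⟪z.2, r⟫)]
    calc ‖f (x + γ • z.2) z.1‖ * |⟪z.2, r⟫| ≤ ‖f (x + γ • z.2) z.1‖ * (‖z.2‖ * ‖r‖) :=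
          mul_le_mul_of_nonneg_left (abs_real_inner_le_norm _ _) (norm_nonneg _)
      _ = ‖r‖ * ‖f (x + γ • z.2) z.1‖ := by rw [hz]; ring
  have hB : Integrable (fun z : Ω × EuclideanSpace ℝ (Fin d) =>
      f (x - γ • z.2) z.1 * ⟪z.2, r⟫) (μξ.prod ν) := by
    refine Integrable.mono' (hint2.norm.const_mul ‖r‖)
      ((hmfm.mul (hmφ.comp measurable_snd)).aestronglyMeasurable) ?_
    filter_upwards [haeprod] with z hz
    rw [norm_mul, Real.norm_eq_abs (⟪z.2, r⟫)]
    calc ‖f (x - γ • z.2) z.1‖ * |⟪z.2, r⟫| ≤ ‖f (x - γ • z.2) z.1‖ * (‖z.2‖ * ‖r‖) :=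
          mul_le_mul_of_nonneg_left (abs_real_inner_le_norm _ _) (norm_nonneg _)
      _ = ‖r‖ * ‖f (x - γ • z.2) z.1‖ := by rw [hz]; ring
  have hC : Integrable (fun z : Ω × EuclideanSpace ℝ (Fin d) =>
      (δ (x + γ • z.2) - δ (x - γ • z.2)) * ⟪z.2, r⟫) (μξ.prod ν) := by
    refine Integrable.mono' (integrable_const (2 * Δ * ‖r‖))
      (((hmδ.comp measurable_snd).mul (hmφ.comp measurable_snd)).aestronglyMeasurable) ?_
    filter_upwards [haeprod] with z hz
    rw [norm_mul, Real.norm_eq_abs (⟪z.2, r⟫), Real.norm_eq_abs]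
    calc |δ (x + γ • z.2) - δ (x - γ • z.2)| * |⟪z.2, r⟫| ≤ (2 * Δ) * (‖z.2‖ * ‖r‖) :=
          mul_le_mul (hδ2 _) (abs_real_inner_le_norm _ _) (abs_nonneg _) (by linarith)
      _ = 2 * Δ * ‖r‖ := by rw [hz]; ring
  -- integrabilities over ν
  have hφint : Integrable (fun e : EuclideanSpace ℝ (Fin d) => |⟪e, r⟫|) ν := by
    refine Integrable.mono' (integrable_const ‖r‖) (hmφ.abs.aestronglyMeasurable) ?_
    filter_upwards [hae] with e he
    rw [Real.norm_eq_abs, abs_abs]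
    calc |⟪e, r⟫| ≤ ‖e‖ * ‖r‖ := abs_real_inner_le_norm _ _
      _ = ‖r‖ := by rw [he]; ring
  have hδint : Integrable (fun e : EuclideanSpace ℝ (Fin d) =>
      (δ (x + γ • e) - δ (x - γ • e)) * ⟪e, r⟫) ν := by
    refine Integrable.mono' (hφint.const_mul (2 * Δ)) ((hmδ.mul hmφ).aestronglyMeasurable) ?_
    refine Filter.Eventually.of_forall fun e => ?_
    rw [norm_mul, Real.norm_eq_abs (⟪e, r⟫), Real.norm_eq_abs]
    exact mul_le_mul_of_nonneg_right (hδ2 e) (abs_nonneg _)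
  have hmarg : Integrable (fun e : EuclideanSpace ℝ (Fin d) =>
      ∫ ω, f (x + γ • e) ω ∂μξ) ν := hint1.integral_prod_right
  have hvec : Integrable (fun e : EuclideanSpace ℝ (Fin d) =>
      ((d : ℝ) / γ * F (x + γ • e)) • e) ν := by
    simp only [hF]
    refine Integrable.mono' (hmarg.norm.const_mul ((d : ℝ) / γ))
      (((hmarg.aestronglyMeasurable.const_mul _).smul aestronglyMeasurable_id)) ?_
    filter_upwards [hae] with e he
    rw [norm_smul, he, mul_one, norm_mul, Real.norm_eq_abs ((d : ℝ) / γ),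
      abs_of_nonneg (by positivity : (0:ℝ) ≤ (d : ℝ) / γ)]
  -- rewrite the LHS
  have hLHS : ∫ z : Ω × EuclideanSpace ℝ (Fin d),
      ⟪((d : ℝ) / (2 * γ) * ((f (x + γ • z.2) z.1 + δ (x + γ • z.2)) -
          (f (x - γ • z.2) z.1 + δ (x - γ • z.2)))) • z.2, r⟫ ∂(μξ.prod ν)
      = (d : ℝ) / (2 * γ) * ((∫ z : Ω × EuclideanSpace ℝ (Fin d),
            f (x + γ • z.2) z.1 * ⟪z.2, r⟫ ∂(μξ.prod ν)
          - ∫ z : Ω × EuclideanSpace ℝ (Fin d),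
            f (x - γ • z.2) z.1 * ⟪z.2, r⟫ ∂(μξ.prod ν))
          + ∫ z : Ω × EuclideanSpace ℝ (Fin d),
            (δ (x + γ • z.2) - δ (x - γ • z.2)) * ⟪z.2, r⟫ ∂(μξ.prod ν)) := by
    rw [show (fun z : Ω × EuclideanSpace ℝ (Fin d) =>
        ⟪((d : ℝ) / (2 * γ) * ((f (x + γ • z.2) z.1 + δ (x + γ • z.2)) -
          (f (x - γ • z.2) z.1 + δ (x - γ • z.2)))) • z.2, r⟫)
        = fun z : Ω × EuclideanSpace ℝ (Fin d) => (d : ℝ) / (2 * γ) *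
          ((f (x + γ • z.2) z.1 * ⟪z.2, r⟫ - f (x - γ • z.2) z.1 * ⟪z.2, r⟫)
            + (δ (x + γ • z.2) - δ (x - γ • z.2)) * ⟪z.2, r⟫) from
      funext fun z => by rw [real_inner_smul_left]; ring]
    rw [integral_const_mul]
    congr 1
    have h2 := integral_add (hA.sub hB) hC
    simp only [Pi.sub_apply] at h2
    rw [integral_sub hA hB] at h2
    exact h2
  -- Fubini
  have hIA : ∫ z : Ω × EuclideanSpace ℝ (Fin d),
      f (x + γ • z.2) z.1 * ⟪z.2, r⟫ ∂(μξ.prod ν)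
      = ∫ e, (∫ ω, f (x + γ • e) ω ∂μξ) * ⟪e, r⟫ ∂ν := by
    rw [integral_prod_symm _ hA]
    refine integral_congr_ae (Filter.Eventually.of_forall fun e => ?_)
    show ∫ ω, f (x + γ • e) ω * ⟪e, r⟫ ∂μξ = _
    exact integral_mul_const _ _
  have hIB : ∫ z : Ω × EuclideanSpace ℝ (Fin d),
      f (x - γ • z.2) z.1 * ⟪z.2, r⟫ ∂(μξ.prod ν)
      = ∫ e, (∫ ω, f (x - γ • e) ω ∂μξ) * ⟪e, r⟫ ∂ν := by
    rw [integral_prod_symm _ hB]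
    refine integral_congr_ae (Filter.Eventually.of_forall fun e => ?_)
    show ∫ ω, f (x - γ • e) ω * ⟪e, r⟫ ∂μξ = _
    exact integral_mul_const _ _
  have hIC : ∫ z : Ω × EuclideanSpace ℝ (Fin d),
      (δ (x + γ • z.2) - δ (x - γ • z.2)) * ⟪z.2, r⟫ ∂(μξ.prod ν)
      = ∫ e, (δ (x + γ • e) - δ (x - γ • e)) * ⟪e, r⟫ ∂ν := by
    rw [integral_prod_symm _ hC]
    refine integral_congr_ae (Filter.Eventually.of_forall fun e => ?_)
    simp [integral_const]
  -- symmetry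
  have hBA : ∫ e, (∫ ω, f (x - γ • e) ω ∂μξ) * ⟪e, r⟫ ∂ν
      = - ∫ e, (∫ ω, f (x + γ • e) ω ∂μξ) * ⟪e, r⟫ ∂ν := by
    have h1 : ∫ e, (∫ ω, f (x - γ • e) ω ∂μξ) * ⟪e, r⟫ ∂ν
        = ∫ e, (fun e' => -((∫ ω, f (x + γ • e') ω ∂μξ) * ⟪e', r⟫)) (-e) ∂ν := by
      refine integral_congr_ae (Filter.Eventually.of_forall fun e => ?_)
      have : x + γ • (-e) = x - γ • e := by rw [smul_neg, ← sub_eq_add_neg]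
      simp only [this, inner_neg_left]
      ring
    rw [h1, hsym (fun e' => -((∫ ω, f (x + γ • e') ω ∂μξ) * ⟪e', r⟫))]
    exact integral_neg _
  -- RHS inner product
  have hRHS1 : ⟪∫ e, ((d : ℝ) / γ * F (x + γ • e)) • e ∂ν, r⟫
      = (d : ℝ) / γ * ∫ e, (∫ ω, f (x + γ • e) ω ∂μξ) * ⟪e, r⟫ ∂ν := by
    rw [real_inner_comm, ← integral_inner hvec, ← integral_const_mul]
    refine integral_congr_ae (Filter.Eventually.of_forall fun e => ?_)
    show ⟪r, ((d : ℝ) / γ * F (x + γ • e)) • e⟫ = _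
    rw [real_inner_smul_right, hF, real_inner_comm]
    ring
  -- δ bound
  have hK0 : 0 ≤ ∫ e, |⟪e, r⟫| ∂ν :=
    integral_nonneg fun e => abs_nonneg _
  have hδbd : ∫ e, (δ (x + γ • e) - δ (x - γ • e)) * ⟪e, r⟫ ∂ν
      ≥ -(2 * Δ) * ∫ e, |⟪e, r⟫| ∂ν := by
    rw [← integral_const_mul]
    refine integral_mono (hφint.const_mul _) hδint fun e => ?_
    have h1 : |(δ (x + γ • e) - δ (x - γ • e)) * ⟪e, r⟫| ≤ 2 * Δ * |⟪e, r⟫| := by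
      rw [abs_mul]
      exact mul_le_mul_of_nonneg_right (hδ2 e) (abs_nonneg _)
    have h2 := neg_abs_le ((δ (x + γ • e) - δ (x - γ • e)) * ⟪e, r⟫)
    linarith
  -- conclusion
  rw [ge_iff_le, hLHS, hIA, hIB, hIC, hBA, hRHS1]
  set I := ∫ e, (∫ ω, f (x + γ • e) ω ∂μξ) * ⟪e, r⟫ ∂ν with hI
  set C' := ∫ e, (δ (x + γ • e) - δ (x - γ • e)) * ⟪e, r⟫ ∂ν with hC'
  set K := ∫ e, |⟪e, r⟫| ∂ν with hK
  have hγ' : (0:ℝ) < 2 * γ := by linarith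
  have hu : (0:ℝ) ≤ (d : ℝ) / (2 * γ) := by positivity
  have e1 : (d : ℝ) / γ = 2 * ((d : ℝ) / (2 * γ)) := by
    field_simp
  have e2 : (d : ℝ) * Δ / γ = (d : ℝ) / (2 * γ) * (2 * Δ) := by field_simp
  rw [e1, e2]
  have hmul : (d : ℝ) / (2 * γ) * (-(2 * Δ) * K) ≤ (d : ℝ) / (2 * γ) * C' :=
    mul_le_mul_of_nonneg_left hδbd hu
  nlinarith [hmul]
end

section
/- Let d ≥ 1 and let ẽ be uniformly distributed on the unit l₁-ball B₁^d(1). Then E[‖ẽ‖₂] ≤ 2/√d. -/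
open MeasureTheory
open scoped ENNReal RealInnerProductSpace

/-!
If `g ≥ 0` is positively homogeneous of degree one and `F ≥ 0` is homogeneous of degree `k` on an
`n`-dimensional real vector space, then writing `e^{-g(x)} = ∫_{r ≥ g(x)} e^{-r} dr` and rescaling
the sublevel sets `{g ≤ r} = r • {g ≤ 1}` gives `∫ F e^{-g} = (n + k)! ∫_{g ≤ 1} F`.
For `g = ‖·‖₁` the left-hand side factorises into one-dimensional Laplace integrals, so `F = 1`
gives `d! vol(B₁) = 2^d` and `F = ‖·‖₂²` gives `(d + 2)! ∫_{B₁} ‖x‖₂² = d 2^(d+1)`.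
Hence `E‖ẽ‖₂² = 2d / ((d + 1)(d + 2)) ≤ 4 / d`, and `(E‖ẽ‖₂)² ≤ E‖ẽ‖₂²`.
-/

open MeasureTheory Real Set
open scoped ENNReal Nat

lemma integrableOn_pow_mul_exp_neg_Ioi (k : ℕ) :
    IntegrableOn (fun r : ℝ => r ^ k * exp (-r)) (Ioi 0) := by
  simpa [Real.rpow_natCast, mul_comm] using
    Real.GammaIntegral_convergent (s := k + 1) (by positivity)

lemma integral_pow_mul_exp_neg_Ioi (k : ℕ) :
    ∫ r in Ioi (0 : ℝ), r ^ k * exp (-r) = k ! := by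
  rw [← Real.Gamma_nat_eq_factorial, Real.Gamma_eq_integral (by positivity)]
  simp [Real.rpow_natCast, mul_comm]

lemma lintegral_pow_mul_exp_neg_Ioi (k : ℕ) :
    ∫⁻ r in Ioi (0 : ℝ), ENNReal.ofReal (r ^ k * exp (-r)) = k ! := by
  rw [← ofReal_integral_eq_lintegral_ofReal (integrableOn_pow_mul_exp_neg_Ioi k),
    integral_pow_mul_exp_neg_Ioi, ENNReal.ofReal_natCast]
  filter_upwards [ae_restrict_mem measurableSet_Ioi] with r (hr : 0 < r)
  positivity

lemma lintegral_Ici_exp_neg (a : ℝ) :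
    ∫⁻ r in Ici a, ENNReal.ofReal (exp (-r)) = ENNReal.ofReal (exp (-a)) := by
  rw [← restrict_Ioi_eq_restrict_Ici, ← integral_exp_neg_Ioi,
    ofReal_integral_eq_lintegral_ofReal]
  · simpa using (exp_neg_integrableOn_Ioi a one_pos).integrable
  · exact Filter.Eventually.of_forall fun r => (exp_pos _).le

section LayerCake

variable {α : Type*} [MeasurableSpace α] {μ : Measure α} [SFinite μ] {g : α → ℝ}

lemma lintegral_mul_exp_neg_eq_lintegral_Ioi_sublevel (hg : Measurable g)
    (hg0 : ∀ x, 0 ≤ g x) {F : α → ℝ≥0∞} (hF : Measurable F) :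
    ∫⁻ x, F x * ENNReal.ofReal (exp (-g x)) ∂μ =
      ∫⁻ r in Ioi (0 : ℝ),
        ENNReal.ofReal (exp (-r)) * ∫⁻ x in {x | g x ≤ r}, F x ∂μ := by
  set K : Set (α × ℝ) := {p | g p.1 ≤ p.2}
  have hK : MeasurableSet K := measurableSet_le (hg.comp measurable_fst) measurable_snd
  set h : α × ℝ → ℝ≥0∞ := K.indicator fun p => ENNReal.ofReal (exp (-p.2))
  have hh : Measurable h := (by fun_prop : Measurable fun p : α × ℝ => _).indicator hK
  have exp_eq (x : α) : ENNReal.ofReal (exp (-g x)) = ∫⁻ r in Ioi (0 : ℝ), h (x, r) := by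
    have hslice : (fun r => h (x, r)) = (Ici (g x)).indicator fun r => ENNReal.ofReal (exp (-r)) :=
      rfl
    rw [hslice, lintegral_indicator measurableSet_Ici, Measure.restrict_restrict measurableSet_Ici,
      ← lintegral_Ici_exp_neg]
    refine le_antisymm ?_ (lintegral_mono_set inter_subset_left)
    rw [← restrict_Ioi_eq_restrict_Ici]
    exact lintegral_mono_set fun r (hr : g x < r) => ⟨le_of_lt hr, (hg0 x).trans_lt hr⟩
  calc ∫⁻ x, F x * ENNReal.ofReal (exp (-g x)) ∂μ
      = ∫⁻ x, (∫⁻ r in Ioi (0 : ℝ), F x * h (x, r)) ∂μ := by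
        refine lintegral_congr fun x => ?_
        rw [exp_eq]
        exact (lintegral_const_mul _ (hh.comp measurable_prodMk_left)).symm
    _ = ∫⁻ r in Ioi (0 : ℝ), ∫⁻ x, F x * h (x, r) ∂μ :=
        lintegral_lintegral_swap ((hF.comp measurable_fst).mul hh).aemeasurable
    _ = ∫⁻ r in Ioi (0 : ℝ),
          ENNReal.ofReal (exp (-r)) * ∫⁻ x in {x | g x ≤ r}, F x ∂μ := by
        refine lintegral_congr fun r => ?_
        have hslice : (fun x => F x * h (x, r)) =
            {x | g x ≤ r}.indicator fun x => ENNReal.ofReal (exp (-r)) * F x := by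
          ext x
          by_cases hx : g x ≤ r <;> simp [h, K, hx, mul_comm]
        rw [hslice, lintegral_indicator (measurableSet_le hg measurable_const),
          lintegral_const_mul _ hF]

end LayerCake

section Homogeneous

open Module

variable {E : Type*} [NormedAddCommGroup E] [NormedSpace ℝ E] [FiniteDimensional ℝ E]
  [MeasurableSpace E] [BorelSpace E] (μ : Measure E) [μ.IsAddHaarMeasure]

lemma lintegral_eq_ofReal_pow_finrank_mul_lintegral_comp_smul {f : E → ℝ≥0∞}
    (hf : Measurable f) {r : ℝ} (hr : 0 < r) :
    ∫⁻ x, f x ∂μ = ENNReal.ofReal (r ^ finrank ℝ E) * ∫⁻ x, f (r • x) ∂μ := by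
  rw [← lintegral_map hf (measurable_const_smul r), Measure.map_addHaar_smul μ hr.ne',
    lintegral_smul_measure, smul_eq_mul, ← mul_assoc, ← ENNReal.ofReal_mul (by positivity),
    abs_of_pos (by positivity), mul_inv_cancel₀ (by positivity), ENNReal.ofReal_one, one_mul]

variable {g : E → ℝ} (hg : Measurable g)
  (hg_smul : ∀ {r : ℝ}, 0 < r → ∀ x, g (r • x) = r * g x)
  {F : E → ℝ≥0∞} (hF : Measurable F) {k : ℕ}
  (hF_smul : ∀ {r : ℝ}, 0 < r → ∀ x, F (r • x) = ENNReal.ofReal (r ^ k) * F x)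
include hg hg_smul hF hF_smul

lemma setLIntegral_sublevel_eq_ofReal_pow_mul {r : ℝ} (hr : 0 < r) :
    ∫⁻ x in {x | g x ≤ r}, F x ∂μ =
      ENNReal.ofReal (r ^ (finrank ℝ E + k)) * ∫⁻ x in {x | g x ≤ 1}, F x ∂μ := by
  have hslice : (fun x => {x | g x ≤ r}.indicator F (r • x)) =
      {x | g x ≤ 1}.indicator fun x => ENNReal.ofReal (r ^ k) * F x := by
    ext x
    have hmem : g (r • x) ≤ r ↔ g x ≤ 1 := by
      rw [hg_smul hr, mul_le_iff_le_one_right hr]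
    by_cases hx : g x ≤ 1 <;> simp [hx, hmem, hF_smul hr]
  rw [← lintegral_indicator (measurableSet_le hg measurable_const),
    lintegral_eq_ofReal_pow_finrank_mul_lintegral_comp_smul μ
      (hF.indicator (measurableSet_le hg measurable_const)) hr, hslice,
    lintegral_indicator (measurableSet_le hg measurable_const), lintegral_const_mul _ hF,
    ← mul_assoc, ← ENNReal.ofReal_mul (by positivity), pow_add]

theorem lintegral_mul_exp_neg_eq_factorial_mul (hg0 : ∀ x, 0 ≤ g x) :
    ∫⁻ x, F x * ENNReal.ofReal (exp (-g x)) ∂μ =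
      (finrank ℝ E + k)! * ∫⁻ x in {x | g x ≤ 1}, F x ∂μ := by
  rw [lintegral_mul_exp_neg_eq_lintegral_Ioi_sublevel hg hg0 hF,
    setLIntegral_congr_fun measurableSet_Ioi fun r (hr : 0 < r) => by
      rw [setLIntegral_sublevel_eq_ofReal_pow_mul μ hg hg_smul hF hF_smul hr, ← mul_assoc,
        ← ENNReal.ofReal_mul (exp_pos _).le, mul_comm (exp _)],
    lintegral_mul_const _ (by fun_prop), lintegral_pow_mul_exp_neg_Ioi]

end Homogeneous

lemma integrable_comp_abs {f : ℝ → ℝ} (hf : IntegrableOn f (Ioi 0)) :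
    Integrable fun x => f |x| := by
  have hIoi : IntegrableOn (fun x => f |x|) (Ioi 0) :=
    hf.congr_fun (fun x (hx : 0 < x) => by rw [abs_of_pos hx]) measurableSet_Ioi
  have hIic : IntegrableOn (fun x => f |x|) (Iic 0) := by
    have hneg : MeasurableEmbedding fun x : ℝ => -x := (Homeomorph.neg ℝ).measurableEmbedding
    rw [← Measure.map_neg_eq_self (volume : Measure ℝ), hneg.integrableOn_map_iff]
    simpa [Function.comp_def] using (integrableOn_Ici_iff_integrableOn_Ioi).mpr hIoi
  simpa using hIic.union hIoi

lemma integrable_pow_abs_mul_exp_neg_abs (k : ℕ) :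
    Integrable fun t : ℝ => |t| ^ k * exp (-|t|) :=
  integrable_comp_abs (integrableOn_pow_mul_exp_neg_Ioi k)

lemma integral_pow_abs_mul_exp_neg_abs (k : ℕ) :
    ∫ t : ℝ, |t| ^ k * exp (-|t|) = 2 * k ! := by
  rw [integral_comp_abs (f := fun t => t ^ k * exp (-t)), integral_pow_mul_exp_neg_Ioi]

section Laplace

variable {ι : Type*} [Fintype ι]

lemma prod_pow_abs_mul_exp_neg_sum_abs (k : ι → ℕ) (x : ι → ℝ) :
    (∏ i, |x i| ^ k i) * exp (-∑ i, |x i|) = ∏ i, (|x i| ^ k i * exp (-|x i|)) := by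
  rw [Finset.prod_mul_distrib, ← Real.exp_sum, Finset.sum_neg_distrib]

lemma integrable_prod_pow_abs_mul_exp_neg_sum_abs (k : ι → ℕ) :
    Integrable fun x : ι → ℝ => (∏ i, |x i| ^ k i) * exp (-∑ i, |x i|) := by
  simp_rw [prod_pow_abs_mul_exp_neg_sum_abs]
  exact Integrable.fintype_prod fun i => integrable_pow_abs_mul_exp_neg_abs (k i)

lemma integral_prod_pow_abs_mul_exp_neg_sum_abs (k : ι → ℕ) :
    ∫ x : ι → ℝ, (∏ i, |x i| ^ k i) * exp (-∑ i, |x i|) = ∏ i, (2 * (k i)! : ℝ) := by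
  simp_rw [prod_pow_abs_mul_exp_neg_sum_abs,
    integral_fintype_prod_volume_eq_prod (fun i t => |t| ^ k i * exp (-|t|)),
    integral_pow_abs_mul_exp_neg_abs]

end Laplace

namespace EuclideanSpace

open Fintype

variable {ι : Type*} [Fintype ι]

lemma sum_abs_smul (r : ℝ) (x : EuclideanSpace ℝ ι) :
    ∑ i, |(r • x) i| = |r| * ∑ i, |x i| := by
  simp [abs_mul, Finset.mul_sum]

lemma norm_le_sum_abs (x : EuclideanSpace ℝ ι) :
    ‖x‖ ≤ ∑ i, |x i| := by
  calc ‖x‖ = √(∑ i, |x i| ^ 2) := by simp [norm_eq]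
    _ ≤ √((∑ i, |x i|) ^ 2) :=
      Real.sqrt_le_sqrt (Finset.sum_sq_le_sq_sum_of_nonneg fun i _ => abs_nonneg _)
    _ = ∑ i, |x i| := Real.sqrt_sq (by positivity)

lemma lintegral_prod_pow_abs_mul_exp_neg_sum_abs (k : ι → ℕ) :
    ∫⁻ x : EuclideanSpace ℝ ι, ENNReal.ofReal ((∏ i, |x i| ^ k i) * exp (-∑ i, |x i|)) =
      ∏ i, (2 * (k i)! : ℝ≥0∞) := by
  rw [(PiLp.volume_preserving_ofLp ι).lintegral_comp_emb
      (MeasurableEquiv.toLp 2 (ι → ℝ)).symm.measurableEmbedding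
      fun y => ENNReal.ofReal ((∏ i, |y i| ^ k i) * exp (-∑ i, |y i|)),
    ← ofReal_integral_eq_lintegral_ofReal (integrable_prod_pow_abs_mul_exp_neg_sum_abs k)
      (Filter.Eventually.of_forall fun y => by positivity),
    integral_prod_pow_abs_mul_exp_neg_sum_abs,
    ENNReal.ofReal_prod_of_nonneg fun i _ => by positivity]
  simp_rw [ENNReal.ofReal_mul zero_le_two, ENNReal.ofReal_ofNat, ENNReal.ofReal_natCast]

lemma lintegral_exp_neg_sum_abs :
    ∫⁻ x : EuclideanSpace ℝ ι, ENNReal.ofReal (exp (-∑ i, |x i|)) = 2 ^ card ι := by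
  simpa using lintegral_prod_pow_abs_mul_exp_neg_sum_abs (ι := ι) 0

lemma lintegral_norm_sq_mul_exp_neg_sum_abs :
    ∫⁻ x : EuclideanSpace ℝ ι,
        ENNReal.ofReal (‖x‖ ^ 2) * ENNReal.ofReal (exp (-∑ i, |x i|)) =
      card ι * 2 ^ (card ι + 1) := by
  classical
  have hterm (i : ι) (x : EuclideanSpace ℝ ι) :
      ENNReal.ofReal (x i ^ 2) * ENNReal.ofReal (exp (-∑ j, |x j|)) =
        ENNReal.ofReal ((∏ j, |x j| ^ (Pi.single i 2 : ι → ℕ) j) * exp (-∑ j, |x j|)) := by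
    rw [Fintype.prod_eq_single i fun j hj => by simp [hj], ← ENNReal.ofReal_mul (sq_nonneg _)]
    simp
  have hvalue (i : ι) :
      ∏ j, (2 * ((Pi.single i 2 : ι → ℕ) j)! : ℝ≥0∞) = 2 ^ (card ι + 1) := by
    rw [Finset.prod_mul_distrib, Finset.prod_const, Finset.card_univ,
      Fintype.prod_eq_single i fun j hj => by simp [hj]]
    simp [pow_succ]
  simp_rw [EuclideanSpace.real_norm_sq_eq, ENNReal.ofReal_sum_of_nonneg fun i _ => sq_nonneg _,
    Finset.sum_mul, hterm]
  rw [lintegral_finsetSum _ fun i _ => by fun_prop]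
  simp_rw [lintegral_prod_pow_abs_mul_exp_neg_sum_abs, hvalue]
  simp

end EuclideanSpace

lemma sq_integral_le_integral_sq {Ω : Type*} [MeasurableSpace Ω] {μ : Measure Ω}
    [IsProbabilityMeasure μ] {X : Ω → ℝ} (hX : MemLp X 2 μ) :
    (∫ ω, X ω ∂μ) ^ 2 ≤ ∫ ω, X ω ^ 2 ∂μ := by
  have h := ProbabilityTheory.variance_nonneg X μ
  rw [ProbabilityTheory.variance_eq_sub hX] at h
  simpa using h

section L1Ball

variable (d : ℕ)

lemma factorial_mul_volume_l1Ball : (d ! : ℝ≥0∞) * volume (l1Ball d) = 2 ^ d := by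
  have h := lintegral_mul_exp_neg_eq_factorial_mul volume
    (g := fun x : EuclideanSpace ℝ (Fin d) => ∑ i, |x i|) (by fun_prop)
    (fun hr x => by rw [EuclideanSpace.sum_abs_smul, abs_of_pos hr]) (F := 1)
    measurable_const (k := 0) (fun _ _ => by simp) (fun x => by positivity)
  simp only [Pi.one_apply, one_mul, add_zero, setLIntegral_one, Fintype.card_fin,
    EuclideanSpace.lintegral_exp_neg_sum_abs, finrank_euclideanSpace_fin] at h
  exact h.symm

lemma factorial_mul_setLIntegral_l1Ball_norm_sq :
    ((d + 2)! : ℝ≥0∞) * ∫⁻ x in l1Ball d, ENNReal.ofReal (‖x‖ ^ 2) =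
      d * 2 ^ (d + 1) := by
  have h := lintegral_mul_exp_neg_eq_factorial_mul volume
    (g := fun x : EuclideanSpace ℝ (Fin d) => ∑ i, |x i|) (by fun_prop)
    (fun hr x => by rw [EuclideanSpace.sum_abs_smul, abs_of_pos hr])
    (F := fun x => ENNReal.ofReal (‖x‖ ^ 2)) (by fun_prop) (k := 2)
    (fun hr x => by
      rw [norm_smul, mul_pow, ENNReal.ofReal_mul (by positivity), Real.norm_eq_abs, sq_abs])
    (fun x => by positivity)
  rw [EuclideanSpace.lintegral_norm_sq_mul_exp_neg_sum_abs, Fintype.card_fin,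
    finrank_euclideanSpace_fin] at h
  exact h.symm

lemma uniformOn_eq_cond (S : Set (EuclideanSpace ℝ (Fin d))) :
    uniformOn S = ProbabilityTheory.cond volume S := rfl

instance isProbabilityMeasure_uniformOn_l1Ball :
    IsProbabilityMeasure (uniformOn (l1Ball d)) := by
  have h := factorial_mul_volume_l1Ball d
  rw [uniformOn_eq_cond]
  refine ProbabilityTheory.cond_isProbabilityMeasure_of_finite (fun h0 => ?_) fun htop => ?_
  · rw [h0, mul_zero] at h
    exact pow_ne_zero d two_ne_zero h.symm
  · rw [htop, ENNReal.mul_top (by simp [Nat.factorial_ne_zero])] at h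
    exact ENNReal.pow_ne_top ENNReal.ofNat_ne_top h.symm

lemma memLp_norm_uniformOn_l1Ball :
    MemLp (fun x => ‖x‖) 2 (uniformOn (l1Ball d)) := by
  refine MemLp.of_bound continuous_norm.aestronglyMeasurable 1 ?_
  rw [uniformOn_eq_cond]
  filter_upwards [ProbabilityTheory.ae_cond_mem (measurableSet_le (by fun_prop) measurable_const)]
    with x (hx : ∑ i, |x i| ≤ 1)
  rw [norm_norm]
  exact (EuclideanSpace.norm_le_sum_abs x).trans hx

lemma integral_norm_sq_uniformOn_l1Ball :
    ∫ x, ‖x‖ ^ 2 ∂uniformOn (l1Ball d) = 2 * d / ((d + 1) * (d + 2)) := by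
  have hV := congrArg ENNReal.toReal (factorial_mul_volume_l1Ball d)
  have hA := congrArg ENNReal.toReal (factorial_mul_setLIntegral_l1Ball_norm_sq d)
  simp only [ENNReal.toReal_mul, ENNReal.toReal_natCast, ENNReal.toReal_pow,
    ENNReal.toReal_ofNat] at hV hA
  rw [uniformOn, integral_smul_measure, integral_eq_lintegral_of_nonneg_ae
    (Filter.Eventually.of_forall fun x => by positivity) (by fun_prop), smul_eq_mul,
    ENNReal.toReal_inv]
  have hfac : ((d + 2)! : ℝ) = (d + 2) * (d + 1) * d ! := by
    push_cast [Nat.factorial_succ]; ring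
  rw [hfac] at hA
  have hV0 : (volume (l1Ball d)).toReal ≠ 0 := fun h0 => by
    rw [h0, mul_zero] at hV
    exact pow_ne_zero d two_ne_zero hV.symm
  rw [← div_eq_inv_mul, div_eq_div_iff hV0 (by positivity)]
  apply mul_left_cancel₀ (Nat.cast_ne_zero.mpr (Nat.factorial_ne_zero d) : (d ! : ℝ) ≠ 0)
  linear_combination hA - 2 * d * hV

end L1Ball

theorem l1_ball_l2_norm_expectation_general {d : ℕ} :
    ∫ e, ‖e‖ ∂(uniformOn (l1Ball d)) ≤ 2 / Real.sqrt d := by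
  have hmoment : (2 * d / ((d + 1) * (d + 2)) : ℝ) ≤ 4 / d := by
    rcases d.eq_zero_or_pos with rfl | hd
    · simp
    · rw [div_le_div_iff₀ (by positivity) (by positivity)]
      nlinarith
  have hsq : (∫ e, ‖e‖ ∂uniformOn (l1Ball d)) ^ 2 ≤ 4 / d :=
    calc (∫ e, ‖e‖ ∂uniformOn (l1Ball d)) ^ 2
        ≤ ∫ e, ‖e‖ ^ 2 ∂uniformOn (l1Ball d) :=
          sq_integral_le_integral_sq (memLp_norm_uniformOn_l1Ball d)
      _ = 2 * d / ((d + 1) * (d + 2)) := integral_norm_sq_uniformOn_l1Ball d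
      _ ≤ 4 / d := hmoment
  calc ∫ e, ‖e‖ ∂uniformOn (l1Ball d)
      ≤ √(4 / d) := (le_abs_self _).trans (Real.abs_le_sqrt hsq)
    _ = 2 / √d := by
      rw [Real.sqrt_div zero_le_four, show (4 : ℝ) = 2 ^ 2 by norm_num, Real.sqrt_sq zero_le_two]

/-- For `ẽ` uniformly distributed on the unit `l₁`-ball,
`E[‖ẽ‖₂] ≤ 2/√d`. -/
theorem l1_ball_l2_norm_expectation {d : ℕ} (hd : 1 ≤ d) :
    ∫ e, ‖e‖ ∂(uniformOn (l1Ball d)) ≤ 2 / Real.sqrt d :=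
  l1_ball_l2_norm_expectation_general
end
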